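/- In dS_fde semantics, for every valuation v and all formulas A, B: v(A∧B) is designated (in {T,B}) if and only if (v(A) and v(B) are both designated) or (v(A) and v(¬A) are both designated) or (v(B) and v(¬B) are both designated). -/
import Mathlib


inductive V4 : Type
  | T | B | N | F
deriving DecidableEq, Repr

def negS : V4 → V4
  | .T => .F
  | .B => .B
  | .N => .N
  | .F => .T

def andD : V4 → V4 → V4
  | .B, _ => .B
  | _, .B => .B
  | .T, y => y
  | .N, .T => .N
  | .N, .N => .N
  | .N, .F => .F
  | .F, _ => .F

def orD : V4 → V4 → V4
  | .B, _ => .B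
  | _, .B => .B
  | .T, _ => .T
  | _, .T => .T
  | .N, .N => .N
  | .N, .F => .N
  | .F, .N => .N
  | .F, .F => .F

inductive Fm : Type
  | var : Nat → Fm
  | neg : Fm → Fm
  | conj : Fm → Fm → Fm
  | disj : Fm → Fm → Fm

def eval (v : Nat → V4) : Fm → V4
  | .var p => v p
  | .neg A => negS (eval v A)
  | .conj A B => andD (eval v A) (eval v B)
  | .disj A B => orD (eval v A) (eval v B)

def des (x : V4) : Prop := x = V4.T ∨ x = V4.B

theorem dsfde_conj_sound (v : Nat → V4) (A B : Fm) :
    des (eval v (Fm.conj A B)) ↔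
      (des (eval v A) ∧ des (eval v B)) ∨
      (des (eval v A) ∧ des (eval v (Fm.neg A))) ∨
      (des (eval v B) ∧ des (eval v (Fm.neg B))) := by
  simp only [eval, des]
  rcases eval v A <;> rcases eval v B <;> simp [andD, negS]
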